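/- arXiv:2409.18021 — 3 statements merged into one kernel-verified Lean document; each statement's English description precedes it below -/
import Mathlib

section
/- Let p be a prime, let F ∈ ℤ_p⟦T⟧ be nonzero, and let n ≥ 0 be an integer such that λ(F) < p^n. Suppose F = ω_n·Q + R for some Q ∈ ℤ_p⟦T⟧ and some polynomial R ∈ ℤ_p[T] of degree < p^n. Then R ≠ 0, μ(R) = μ(F), and λ(R) = λ(F). -/
open PowerSeries Polynomial Classical in
/-- `p`-adic valuation on `ℤ_[p]`, with value `⊤` at `0`. -/
noncomputable def vp (p : ℕ) [Fact p.Prime] (x : ℤ_[p]) : ℕ∞ :=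
  if x = 0 then ⊤ else x.valuation

/-- Iwasawa `μ`-invariant: the minimum of the `p`-adic valuations of the coefficients. -/
noncomputable def mu (p : ℕ) [Fact p.Prime] (F : PowerSeries ℤ_[p]) : ℕ∞ :=
  ⨅ i : ℕ, vp p (PowerSeries.coeff i F)

/-- Iwasawa `λ`-invariant: the least index whose coefficient valuation attains `μ`. -/
noncomputable def lam (p : ℕ) [Fact p.Prime] (F : PowerSeries ℤ_[p]) : ℕ :=
  sInf { i : ℕ | vp p (PowerSeries.coeff i F) = mu p F }

/-!
Write `F = p ^ μ • G` with `G ≢ 0 (mod p)`, so that `λ(F)` is the order of `G mod p`. The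
polynomial `ω_n` is distinguished (`ω_n ≡ T ^ p ^ n mod p`), so Weierstrass division by it is
unique; dividing `G` by `ω_n` as `G = ω_n * Q' + R'` therefore gives `R = p ^ μ • R'`, and
`R' ≡ G (mod p)` in degrees `< p ^ n`. Since `λ(F) < p ^ n`, the reductions of `R'` and `G`
have the same order.
-/

open IsLocalRing
open scoped PowerSeries Polynomial

section Valuation

variable {p : ℕ} [Fact p.Prime]

lemma vp_p_pow_mul (m : ℕ) (x : ℤ_[p]) : vp p ((p : ℤ_[p]) ^ m * x) = m + vp p x := by
  by_cases hx : x = 0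
  · simp [vp, hx]
  · simp [vp, hx, NeZero.ne]

lemma pow_dvd_iff_le_vp (x : ℤ_[p]) (k : ℕ) : (p : ℤ_[p]) ^ k ∣ x ↔ (k : ℕ∞) ≤ vp p x := by
  by_cases hx : x = 0
  · simp [vp, hx]
  · rw [vp, if_neg hx, ← Ideal.mem_span_singleton,
      PadicInt.mem_span_pow_iff_le_valuation x hx, Nat.cast_le]

lemma vp_eq_zero_iff (x : ℤ_[p]) : vp p x = 0 ↔ residue ℤ_[p] x ≠ 0 := by
  rw [Ne, residue_eq_zero_iff, PadicInt.maximalIdeal_eq_span_p, ← pow_one (p : ℤ_[p]),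
    Ideal.mem_span_singleton, pow_dvd_iff_le_vp, Nat.cast_one, Order.one_le_iff_ne_zero, not_not]

lemma mu_p_pow_smul (m : ℕ) (G : ℤ_[p]⟦X⟧) : mu p ((p : ℤ_[p]) ^ m • G) = m + mu p G := by
  simp only [mu, PowerSeries.coeff_smul, smul_eq_mul, vp_p_pow_mul, ENat.add_iInf]

lemma lam_p_pow_smul (m : ℕ) (G : ℤ_[p]⟦X⟧) : lam p ((p : ℤ_[p]) ^ m • G) = lam p G := by
  simp only [lam, mu_p_pow_smul, PowerSeries.coeff_smul, smul_eq_mul, vp_p_pow_mul,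
    add_right_inj_of_ne_top (ENat.natCast_ne_top m)]

lemma mu_eq_zero_of_map_residue_ne_zero {G : ℤ_[p]⟦X⟧} (hG : G.map (residue ℤ_[p]) ≠ 0) :
    mu p G = 0 := by
  obtain ⟨i, hi⟩ := PowerSeries.exists_coeff_ne_zero_iff_ne_zero.2 hG
  rw [PowerSeries.coeff_map, ← vp_eq_zero_iff] at hi
  exact nonpos_iff_eq_zero.1 (hi ▸ iInf_le _ i)

lemma lam_eq_order_map_residue {G : ℤ_[p]⟦X⟧} (hG : G.map (residue ℤ_[p]) ≠ 0) :
    (lam p G : ℕ∞) = (G.map (residue ℤ_[p])).order := by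
  have hlam : {i | vp p (PowerSeries.coeff i G) = mu p G} =
      {i | PowerSeries.coeff i (G.map (residue ℤ_[p])) ≠ 0} := by
    ext i
    rw [Set.mem_ofPred_eq, Set.mem_ofPred_eq, mu_eq_zero_of_map_residue_ne_zero hG,
      vp_eq_zero_iff, PowerSeries.coeff_map]
  obtain ⟨i, hi⟩ := PowerSeries.exists_coeff_ne_zero_iff_ne_zero.2 hG
  have hmem : sInf {i | PowerSeries.coeff i (G.map (residue ℤ_[p])) ≠ 0} ∈ {i | _} :=
    Nat.sInf_mem ⟨i, hi⟩
  rw [eq_comm, PowerSeries.order_eq_nat, lam, hlam]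
  exact ⟨hmem, fun j hj ↦ not_not.1 (Nat.notMem_of_lt_sInf hj)⟩

lemma exists_eq_p_pow_smul {F : ℤ_[p]⟦X⟧} (hF : F ≠ 0) :
    ∃ (m : ℕ) (G : ℤ_[p]⟦X⟧), F = (p : ℤ_[p]) ^ m • G ∧ G.map (residue ℤ_[p]) ≠ 0 := by
  obtain ⟨i₀, hi₀⟩ : ∃ i, vp p (PowerSeries.coeff i F) = mu p F := ciInf_mem _
  obtain ⟨m, hm⟩ : ∃ m : ℕ, (m : ℕ∞) = mu p F := by
    obtain ⟨i, hi⟩ := PowerSeries.exists_coeff_ne_zero_iff_ne_zero.2 hF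
    refine ENat.ne_top_iff_exists.1 (ne_top_of_le_ne_top ?_ (iInf_le _ i))
    simp [vp, hi]
  have hdvd (i : ℕ) : (p : ℤ_[p]) ^ m ∣ PowerSeries.coeff i F :=
    (pow_dvd_iff_le_vp _ _).2 (hm.symm ▸ iInf_le _ i)
  choose c hc using hdvd
  refine ⟨m, PowerSeries.mk c, PowerSeries.ext fun i ↦ by simp [hc i], fun h ↦ ?_⟩
  have hc₀ : vp p (c i₀) = 0 := by
    rw [hc, vp_p_pow_mul, ← hm] at hi₀
    simpa using hi₀
  rw [vp_eq_zero_iff] at hc₀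
  exact hc₀ (by simpa using congr(PowerSeries.coeff i₀ $h))

end Valuation

namespace Polynomial

variable {A : Type*} [CommRing A]

lemma coeff_one_add_X_pow_sub_one (N k : ℕ) :
    ((1 + X) ^ N - 1 : A[X]).coeff k = N.choose k - if k = 0 then 1 else 0 := by
  rw [coeff_sub, coeff_one_add_X_pow, coeff_one]

lemma natDegree_one_add_X_pow_sub_one [Nontrivial A] {N : ℕ} (hN : N ≠ 0) :
    ((1 + X) ^ N - 1 : A[X]).natDegree = N := by
  refine natDegree_eq_of_le_of_coeff_ne_zero ((natDegree_le_iff_coeff_eq_zero).2 fun k hk ↦ ?_)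
    (by rw [coeff_one_add_X_pow_sub_one]; simp [hN])
  have hk : N < k := by exact_mod_cast hk
  rw [coeff_one_add_X_pow_sub_one]
  simp [Nat.choose_eq_zero_of_lt hk, (Nat.zero_le _).trans_lt hk |>.ne']

lemma isDistinguishedAt_one_add_X_pow_prime_pow_sub_one [Nontrivial A] {I : Ideal A}
    {p : ℕ} (hp : p.Prime) (hpI : (p : A) ∈ I) (n : ℕ) :
    ((1 + X) ^ p ^ n - 1 : A[X]).IsDistinguishedAt I := by
  have hdeg := natDegree_one_add_X_pow_sub_one (A := A) (pow_ne_zero n hp.ne_zero)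
  refine ⟨⟨fun {k} hk ↦ ?_⟩, ?_⟩
  · rw [hdeg] at hk
    rcases Nat.eq_zero_or_pos k with rfl | hk₀
    · simp only [coeff_one_add_X_pow_sub_one, Nat.choose_zero_right, Nat.cast_one, if_true,
        sub_self, zero_mem]
    · rw [coeff_one_add_X_pow_sub_one, if_neg hk₀.ne', sub_zero]
      exact I.mem_of_dvd (Nat.cast_dvd_cast (hp.dvd_choose_pow hk₀.ne' hk.ne)) hpI
  · rw [Monic, leadingCoeff, hdeg, coeff_one_add_X_pow_sub_one]
    simp [hp.ne_zero]

lemma order_map_residue_one_add_X_pow_prime_pow_sub_one [IsLocalRing A] {p : ℕ} (hp : p.Prime)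
    (hpI : (p : A) ∈ maximalIdeal A) (n : ℕ) :
    ((((1 + X) ^ p ^ n - 1 : A[X]) : A⟦X⟧).map (residue A)).order = (p ^ n : ℕ) := by
  have h := (isDistinguishedAt_one_add_X_pow_prime_pow_sub_one hp hpI n)
    |>.coe_natDegree_eq_order_map _ 1 (by simp) (mul_one _).symm
  rw [natDegree_one_add_X_pow_sub_one (pow_ne_zero n hp.ne_zero)] at h
  exact_mod_cast h.symm

end Polynomial

namespace PowerSeries

lemma order_eq_of_coeff_eq {k : Type*} [Semiring k] {f g : k⟦X⟧} {N : ℕ}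
    (hfg : ∀ i < N, coeff i f = coeff i g) (hf : f.order < N) : g.order = f.order := by
  obtain ⟨n, hn⟩ := ENat.ne_top_iff_exists.1 (hf.trans (ENat.natCast_lt_top N)).ne
  rw [← hn] at hf ⊢
  have hnN : n < N := by exact_mod_cast hf
  obtain ⟨hfn, hfi⟩ := order_eq_nat.1 hn.symm
  exact order_eq_nat.2 ⟨hfg n hnN ▸ hfn, fun i hi ↦ hfg i (hi.trans hnN) ▸ hfi i hi⟩

section IsLocalRing

variable {A : Type*} [CommRing A] [IsLocalRing A] {f g q : A⟦X⟧} {r : A[X]} {N : ℕ}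

lemma isWeierstrassDivision_of_order_map_residue_eq (hg : (g.map (residue A)).order = N)
    (hr : r.degree < N) (hf : f = g * q + r) : f.IsWeierstrassDivision g q r := by
  refine ⟨?_, hf⟩
  change _ < ((g.map (residue A)).order.toNat : WithBot ℕ)
  rwa [hg, ENat.toNat_natCast]

lemma IsWeierstrassDivision.coeff_map_residue_eq (H : f.IsWeierstrassDivision g q r)
    (hg : (g.map (residue A)).order = N) {i : ℕ} (hi : i < N) :
    coeff i (f.map (residue A)) = coeff i ((r : A⟦X⟧).map (residue A)) := by
  rw [coeff_map, coeff_map, ← sub_eq_zero, ← map_sub, ← map_sub, residue_eq_zero_iff]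
  refine H.coeff_f_sub_r_mem ?_
  change i < (g.map (residue A)).order.toNat
  rwa [hg, ENat.toNat_natCast]

end IsLocalRing

end PowerSeries

theorem stmt_0 (p : ℕ) [Fact p.Prime] (F : PowerSeries ℤ_[p]) (hF : F ≠ 0)
    (n : ℕ) (hlam : lam p F < p ^ n)
    (Q : PowerSeries ℤ_[p]) (R : Polynomial ℤ_[p]) (hdeg : R.degree < (p ^ n : ℕ))
    (hFQR : F = (((1 + Polynomial.X) ^ p ^ n - 1 : Polynomial ℤ_[p]) : PowerSeries ℤ_[p]) * Q
      + (R : PowerSeries ℤ_[p])) :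
    R ≠ 0 ∧ mu p (R : PowerSeries ℤ_[p]) = mu p F ∧ lam p (R : PowerSeries ℤ_[p]) = lam p F := by
  set ω : ℤ_[p]⟦X⟧ := (((1 + Polynomial.X) ^ p ^ n - 1 : ℤ_[p][X]) : ℤ_[p]⟦X⟧)
  have hω : (ω.map (residue ℤ_[p])).order = (p ^ n : ℕ) :=
    Polynomial.order_map_residue_one_add_X_pow_prime_pow_sub_one Fact.out
      ((mem_maximalIdeal _).2 PadicInt.p_nonunit) n
  have hω₀ : ω.map (residue ℤ_[p]) ≠ 0 :=
    PowerSeries.order_finite_iff_ne_zero.1 (hω ▸ ENat.natCast_lt_top _)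
  obtain ⟨m, G, rfl, hG⟩ := exists_eq_p_pow_smul hF
  obtain ⟨Q', R', hGdiv⟩ := PowerSeries.exists_isWeierstrassDivision G hω₀
  have hFdiv := PowerSeries.isWeierstrassDivision_of_order_map_residue_eq hω hdeg hFQR
  obtain rfl : R = (p : ℤ_[p]) ^ m • R' := (hFdiv.elim hω₀ (hGdiv.smul _)).2
  have hlamG : (G.map (residue ℤ_[p])).order < (p ^ n : ℕ) := by
    rw [← lam_eq_order_map_residue hG, ← lam_p_pow_smul m]
    exact_mod_cast hlam
  have hR' : ((R' : ℤ_[p]⟦X⟧).map (residue ℤ_[p])).order = (G.map (residue ℤ_[p])).order :=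
    PowerSeries.order_eq_of_coeff_eq (fun _ ↦ hGdiv.coeff_map_residue_eq hω) hlamG
  have hR'₀ : (R' : ℤ_[p]⟦X⟧).map (residue ℤ_[p]) ≠ 0 :=
    PowerSeries.order_finite_iff_ne_zero.1 (hR' ▸ hlamG.trans (ENat.natCast_lt_top _))
  rw [Polynomial.coe_smul, mu_p_pow_smul, mu_p_pow_smul, lam_p_pow_smul, lam_p_pow_smul]
  refine ⟨fun h ↦ hR'₀ ?_, ?_, ?_⟩
  · rw [(smul_eq_zero.1 h).resolve_left (pow_ne_zero _ (NeZero.ne _))]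
    simp
  · rw [mu_eq_zero_of_map_residue_ne_zero hG, mu_eq_zero_of_map_residue_ne_zero hR'₀]
  · exact_mod_cast (lam_eq_order_map_residue hR'₀).trans
      (hR'.trans (lam_eq_order_map_residue hG).symm)
end

section
/- Let p be a prime and let F, G ∈ ℤ_p⟦T⟧ be nonzero power series. Then F·G is nonzero, μ(F·G) = μ(F) + μ(G), and λ(F·G) = λ(F) + λ(G). -/
/-!
In the `n`-th coefficient `∑_{i+j=n} a_i b_j` of `F * G`, every term has valuation at least
`μ(F) + μ(G)`, strictly more unless `i ≥ λ(F)` and `j ≥ λ(G)`. Hence all terms are strictly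
above `μ(F) + μ(G)` when `n < λ(F) + λ(G)`, while for `n = λ(F) + λ(G)` exactly one term, the
corner `a_{λ(F)} b_{λ(G)}`, attains it, so the ultrametric inequality makes the whole coefficient
attain it. This only uses that the valuation is additive, ultrametric and `ℕ∞`-valued.
-/

open PowerSeries Finset.HasAntidiagonal

namespace PowerSeries

variable {R : Type*} [Ring R]

/-- `m` and `a` play the roles of `μ(F)` and `λ(F)` for the valuation `v`. -/
structure IsMinValuationAt (v : AddValuation R ℕ∞) (F : R⟦X⟧) (m a : ℕ) : Prop where
  le_valuation_coeff (i : ℕ) : (m : ℕ∞) ≤ v (coeff i F)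
  lt_valuation_coeff_of_lt {i : ℕ} (hi : i < a) : (m : ℕ∞) < v (coeff i F)
  valuation_coeff_eq : v (coeff a F) = m

namespace IsMinValuationAt

variable {v : AddValuation R ℕ∞} {F G : R⟦X⟧} {m m' a b : ℕ}

theorem ne_zero (hF : IsMinValuationAt v F m a) : F ≠ 0 := by
  rintro rfl
  simpa using hF.valuation_coeff_eq

theorem le_valuation_mul_coeff (hF : IsMinValuationAt v F m a) (hG : IsMinValuationAt v G m' b)
    (i j : ℕ) : ((m + m' : ℕ) : ℕ∞) ≤ v (coeff i F * coeff j G) := by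
  rw [v.map_mul, Nat.cast_add]
  exact add_le_add (hF.le_valuation_coeff i) (hG.le_valuation_coeff j)

theorem lt_valuation_mul_coeff (hF : IsMinValuationAt v F m a) (hG : IsMinValuationAt v G m' b)
    {i j : ℕ} (hij : i < a ∨ j < b) :
    ((m + m' : ℕ) : ℕ∞) < v (coeff i F * coeff j G) := by
  rw [v.map_mul, Nat.cast_add]
  rcases hij with hi | hj
  · exact ENat.add_lt_add_of_lt_of_le (ENat.natCast_ne_top m') (hF.lt_valuation_coeff_of_lt hi)
      (hG.le_valuation_coeff j)
  · exact ENat.add_lt_add_of_le_of_lt (ENat.natCast_ne_top m) (hF.le_valuation_coeff i)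
      (hG.lt_valuation_coeff_of_lt hj)

theorem mul (hF : IsMinValuationAt v F m a) (hG : IsMinValuationAt v G m' b) :
    IsMinValuationAt v (F * G) (m + m') (a + b) where
  le_valuation_coeff n := by
    rw [coeff_mul]
    exact v.map_le_sum fun ij _ => hF.le_valuation_mul_coeff hG ij.1 ij.2
  lt_valuation_coeff_of_lt {n} hn := by
    rw [coeff_mul]
    refine v.map_lt_sum (ENat.natCast_ne_top _) fun ij hij => hF.lt_valuation_mul_coeff hG ?_
    rw [mem_antidiagonal] at hij
    omega
  valuation_coeff_eq := by
    have hab : (a, b) ∈ antidiagonal (a + b) := mem_antidiagonal.2 rfl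
    have hcorner : v (coeff a F * coeff b G) = (m + m' : ℕ) := by
      rw [v.map_mul, hF.valuation_coeff_eq, hG.valuation_coeff_eq, Nat.cast_add]
    have hrest : (m + m' : ℕ) < v (∑ ij ∈ (antidiagonal (a + b)).erase (a, b),
        coeff ij.1 F * coeff ij.2 G) := by
      refine v.map_lt_sum (ENat.natCast_ne_top _) fun ij hij => hF.lt_valuation_mul_coeff hG ?_
      obtain ⟨hne, hij⟩ := Finset.mem_erase.1 hij
      rw [mem_antidiagonal] at hij
      by_contra! h
      exact hne (Prod.ext (by omega) (by omega))
    rw [coeff_mul, ← Finset.add_sum_erase _ _ hab, v.map_add_eq_of_lt_left (hcorner ▸ hrest),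
      hcorner]

end IsMinValuationAt

end PowerSeries

section PadicValuation

open PadicInt

variable {p : ℕ} [Fact p.Prime]

theorem vp_mul (x y : ℤ_[p]) : vp p (x * y) = vp p x + vp p y := by
  by_cases hx : x = 0
  · simp [vp, hx]
  by_cases hy : y = 0
  · simp [vp, hy]
  simp [vp, hx, hy, valuation_mul hx hy]

theorem min_vp_le_vp_add (x y : ℤ_[p]) : min (vp p x) (vp p y) ≤ vp p (x + y) := by
  by_cases hxy : x + y = 0
  · simp [vp, hxy]
  by_cases hx : x = 0
  · simp [hx]
  by_cases hy : y = 0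
  · simp [hy]
  simp only [vp, if_neg hx, if_neg hy, if_neg hxy]
  rw [← Nat.mono_cast.map_min]
  exact_mod_cast le_valuation_add hxy

variable (p) in
noncomputable def vpAddValuation : AddValuation ℤ_[p] ℕ∞ :=
  AddValuation.of (vp p) (by simp [vp]) (by simp [vp]) min_vp_le_vp_add vp_mul

end PadicValuation

section Iwasawa

variable {p : ℕ} [Fact p.Prime] {F : ℤ_[p]⟦X⟧}

theorem mu_ne_top (hF : F ≠ 0) : mu p F ≠ ⊤ := by
  obtain ⟨i, hi⟩ := exists_coeff_ne_zero_iff_ne_zero.2 hF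
  refine ne_top_of_le_ne_top ?_ (iInf_le _ i)
  simp [vp, hi]

theorem exists_vp_coeff_eq_mu (F : ℤ_[p]⟦X⟧) : ∃ i, vp p (coeff i F) = mu p F :=
  ciInf_mem _

theorem isMinValuationAt_mu_lam (hF : F ≠ 0) :
    IsMinValuationAt (vpAddValuation p) F (mu p F).toNat (lam p F) where
  le_valuation_coeff i := by
    rw [ENat.natCast_toNat (mu_ne_top hF)]
    exact iInf_le _ i
  lt_valuation_coeff_of_lt {i} hi := by
    rw [ENat.natCast_toNat (mu_ne_top hF)]
    exact (iInf_le _ i).lt_of_ne' (Nat.notMem_of_lt_sInf hi)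
  valuation_coeff_eq := by
    rw [ENat.natCast_toNat (mu_ne_top hF)]
    exact Nat.sInf_mem (exists_vp_coeff_eq_mu F)

namespace PowerSeries.IsMinValuationAt

variable {m a : ℕ}

theorem mu_eq (h : IsMinValuationAt (vpAddValuation p) F m a) : mu p F = m :=
  le_antisymm (h.valuation_coeff_eq ▸ iInf_le _ a) (le_iInf h.le_valuation_coeff)

theorem lam_eq (h : IsMinValuationAt (vpAddValuation p) F m a) : lam p F = a := by
  have ha : a ∈ {i | vp p (coeff i F) = mu p F} := h.valuation_coeff_eq.trans h.mu_eq.symm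
  refine le_antisymm (Nat.sInf_le ha) (le_csInf ⟨a, ha⟩ fun i hi => not_lt.1 fun hia => ?_)
  exact (h.lt_valuation_coeff_of_lt hia).ne' (hi.trans h.mu_eq)

end PowerSeries.IsMinValuationAt

end Iwasawa

theorem stmt_5 (p : ℕ) [Fact p.Prime] (F G : PowerSeries ℤ_[p]) (hF : F ≠ 0) (hG : G ≠ 0) :
    F * G ≠ 0 ∧ mu p (F * G) = mu p F + mu p G ∧ lam p (F * G) = lam p F + lam p G := by
  have hFG := (isMinValuationAt_mu_lam hF).mul (isMinValuationAt_mu_lam hG)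
  refine ⟨hFG.ne_zero, ?_, hFG.lam_eq⟩
  rw [hFG.mu_eq, Nat.cast_add, ENat.natCast_toNat (mu_ne_top hF),
    ENat.natCast_toNat (mu_ne_top hG)]
end

section
/- Let p be a prime and let n ≥ 1 be an odd integer. The polynomial ω_n^+ = ∏_{1 ≤ i ≤ n, i even} Φ_{p^i}(1+T) ∈ ℤ_p[T] satisfies μ(ω_n^+) = 0 and λ(ω_n^+) = (p^n − p)/(p + 1). -/
/-! Since `Φ_{p^i}(X) ≡ (X - 1)^{φ(p^i)} mod p`, the polynomial `ω_n^+` reduces modulo `p` to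
`T^d` with `d = ∑ φ(p^i)` over the even `i ≤ n`: its coefficients are units at `T^d` and
non-units elsewhere, so `μ = 0` and `λ = d`. Finally `φ(p^{2j})(p + 1) = p^{2j+1} - p^{2j-1}`,
so `d (p + 1)` telescopes to `p^n - p`. -/

open Polynomial
open scoped Nat

section

variable {p : ℕ} [Fact p.Prime]

lemma vp_eq_zero_iff_toZMod_ne_zero (x : ℤ_[p]) : vp p x = 0 ↔ PadicInt.toZMod x ≠ 0 := by
  by_cases hx : x = 0
  · simp [vp, hx]
  · rw [ne_eq, ← RingHom.mem_ker, PadicInt.ker_toZMod, PadicInt.maximalIdeal_eq_span_p,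
      ← pow_one (p : ℤ_[p]), PadicInt.mem_span_pow_iff_le_valuation x hx]
    simp [vp, hx]

lemma vp_coeff_eq_zero_iff_of_map_eq_X_pow {F : PowerSeries ℤ_[p]} {d : ℕ}
    (hF : PowerSeries.map PadicInt.toZMod F = PowerSeries.X ^ d) (k : ℕ) :
    vp p (PowerSeries.coeff k F) = 0 ↔ k = d := by
  have := congrArg (PowerSeries.coeff k) hF
  rw [PowerSeries.coeff_map, PowerSeries.coeff_X_pow] at this
  rw [vp_eq_zero_iff_toZMod_ne_zero, this]
  split_ifs with hk <;> simp [hk]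

lemma mu_eq_zero_of_map_eq_X_pow {F : PowerSeries ℤ_[p]} {d : ℕ}
    (hF : PowerSeries.map PadicInt.toZMod F = PowerSeries.X ^ d) : mu p F = 0 :=
  nonpos_iff_eq_zero.1 <| iInf_le_of_le d ((vp_coeff_eq_zero_iff_of_map_eq_X_pow hF d).2 rfl).le

lemma lam_eq_of_map_eq_X_pow {F : PowerSeries ℤ_[p]} {d : ℕ}
    (hF : PowerSeries.map PadicInt.toZMod F = PowerSeries.X ^ d) : lam p F = d := by
  have hset : {i | vp p (PowerSeries.coeff i F) = mu p F} = {d} := by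
    ext k
    rw [Set.mem_ofPred_eq, mu_eq_zero_of_map_eq_X_pow hF, vp_coeff_eq_zero_iff_of_map_eq_X_pow hF]
    rfl
  rw [lam, hset, csInf_singleton]

end

lemma cyclotomic_prime_pow_comp_one_add_X (R : Type*) [CommRing R] (p : ℕ) [Fact p.Prime]
    [CharP R p] {k : ℕ} (hk : 0 < k) : (cyclotomic (p ^ k) R).comp (1 + X) = X ^ φ (p ^ k) := by
  have hp : p.Prime := Fact.out
  have h := cyclotomic_mul_prime_pow_eq R (m := 1) hp.not_dvd_one hk
  rw [mul_one, cyclotomic_one] at h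
  have hφ : p ^ k - p ^ (k - 1) = φ (p ^ k) := by
    obtain ⟨j, rfl⟩ := Nat.exists_eq_add_one_of_ne_zero hk.ne'
    rw [Nat.totient_prime_pow_succ hp, Nat.mul_sub_one, ← pow_succ]
    rfl
  rw [h, hφ, pow_comp, sub_comp, X_comp, one_comp, add_sub_cancel_left]

lemma map_toZMod_prod_cyclotomic_comp (p : ℕ) [Fact p.Prime] (s : Finset ℕ)
    (hs : ∀ i ∈ s, 0 < i) :
    (∏ i ∈ s, (cyclotomic (p ^ i) ℤ_[p]).comp (1 + X)).map PadicInt.toZMod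
      = X ^ ∑ i ∈ s, φ (p ^ i) := by
  rw [Polynomial.map_prod, ← Finset.prod_pow_eq_pow_sum]
  refine Finset.prod_congr rfl fun i hi => ?_
  rw [Polynomial.map_comp, map_cyclotomic, Polynomial.map_add, Polynomial.map_one, map_X,
    cyclotomic_prime_pow_comp_one_add_X _ p (hs i hi)]

lemma totient_prime_pow_succ_mul_add {p : ℕ} (hp : p.Prime) (j : ℕ) :
    φ (p ^ (j + 1)) * (p + 1) + p ^ j = p ^ (j + 2) := by
  rw [Nat.totient_prime_pow_succ hp]
  obtain ⟨q, rfl⟩ := Nat.exists_eq_add_one_of_ne_zero hp.ne_zero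
  rw [Nat.add_sub_cancel]
  ring

lemma sum_totient_even_prime_pow_mul_add {p : ℕ} (hp : p.Prime) (m : ℕ) :
    (∑ i ∈ (Finset.Icc 1 (2 * m + 1)).filter Even, φ (p ^ i)) * (p + 1) + p = p ^ (2 * m + 1) := by
  induction m with
  | zero => simp [Finset.filter_singleton]
  | succ m ih =>
    rw [show 2 * (m + 1) + 1 = 2 * m + 1 + 1 + 1 by ring, Finset.sum_filter,
      Finset.sum_Icc_succ_top (by omega), Finset.sum_Icc_succ_top (by omega), ← Finset.sum_filter,
      if_pos (by simp [parity_simps]), if_neg (by simp [parity_simps]), add_zero, add_mul,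
      add_right_comm, ih, add_comm, totient_prime_pow_succ_mul_add hp]

theorem stmt_9_general (p : ℕ) [Fact p.Prime] (n : ℕ) (hn : Odd n) :
    mu p ((∏ i ∈ (Finset.Icc 1 n).filter (fun i => Even i),
        (Polynomial.cyclotomic (p ^ i) ℤ_[p]).comp (1 + Polynomial.X) : Polynomial ℤ_[p]) : PowerSeries ℤ_[p]) = 0
      ∧ lam p ((∏ i ∈ (Finset.Icc 1 n).filter (fun i => Even i),
        (Polynomial.cyclotomic (p ^ i) ℤ_[p]).comp (1 + Polynomial.X) : Polynomial ℤ_[p]) : PowerSeries ℤ_[p])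
        = (p ^ n - p) / (p + 1) := by
  obtain ⟨m, rfl⟩ := hn
  have hpos : ∀ i ∈ (Finset.Icc 1 (2 * m + 1)).filter Even, 0 < i := fun i hi =>
    (Finset.mem_Icc.1 (Finset.mem_filter.1 hi).1).1
  have hF := congrArg (fun F : (ZMod p)[X] => (F : PowerSeries (ZMod p)))
    (map_toZMod_prod_cyclotomic_comp p _ hpos)
  simp only [polynomial_map_coe, coe_pow, coe_X] at hF
  refine ⟨mu_eq_zero_of_map_eq_X_pow hF, ?_⟩
  rw [lam_eq_of_map_eq_X_pow hF, ← sum_totient_even_prime_pow_mul_add Fact.out m,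
    Nat.add_sub_cancel, Nat.mul_div_cancel _ (Nat.succ_pos p)]

theorem stmt_9 (p : ℕ) [Fact p.Prime] (n : ℕ) (hn1 : 1 ≤ n) (hn : Odd n) :
    mu p ((∏ i ∈ (Finset.Icc 1 n).filter (fun i => Even i),
        (Polynomial.cyclotomic (p ^ i) ℤ_[p]).comp (1 + Polynomial.X) : Polynomial ℤ_[p]) : PowerSeries ℤ_[p]) = 0
      ∧ lam p ((∏ i ∈ (Finset.Icc 1 n).filter (fun i => Even i),
        (Polynomial.cyclotomic (p ^ i) ℤ_[p]).comp (1 + Polynomial.X) : Polynomial ℤ_[p]) : PowerSeries ℤ_[p])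
        = (p ^ n - p) / (p + 1) :=
  stmt_9_general p n hn
end
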